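/- For every fixed 𝐱 ∈ ℝ³ the function z ↦ Δ_{+,λ}(z,𝐱) is an entire analytic function on ℂ, i.e. it is complex differentiable at every z ∈ ℂ. -/

import Mathlib

open Real MeasureTheory
open scoped RealInnerProductSpace

noncomputable section

/-- ω(p) = √(|p|² + m²) -/
def freqOmega (m : ℝ) (p : EuclideanSpace ℝ (Fin 3)) : ℝ := Real.sqrt (‖p‖ ^ 2 + m ^ 2)

/-- The modified two-point function Δ_{+,λ}(z,x) for complex time z. -/
def DeltaPlusLam (m lam : ℝ) (z : ℂ) (x : EuclideanSpace ℝ (Fin 3)) : ℂ :=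
  ((2 * π : ℂ) ^ 3)⁻¹ * ∫ p : EuclideanSpace ℝ (Fin 3),
    ((2 * freqOmega m p : ℝ) : ℂ)⁻¹ * (Real.exp (-lam ^ 2 * (2 * ‖p‖ ^ 2 + m ^ 2)) : ℂ) *
      Complex.exp (-Complex.I * ((freqOmega m p : ℂ) * z - (⟪p, x⟫ : ℝ)))

end

/-!
The integrand is `g p * exp (w p * z)` with `g p = (2ω)⁻¹ e^{-λ²(2|p|²+m²)} e^{i p·x}` and
`w p = -i ω(p)`. On the unit ball around any `z₀` the `z`-derivative of the integrand is
dominated by `‖g‖ e^{R ‖w‖}` with `R = ‖z₀‖ + 2`, so one may differentiate under the integral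
sign as soon as these are integrable for every `R`. Since `2|p|² + m² = ω² + |p|²`, we have
`‖g p‖ e^{R ω} ≤ (2m)⁻¹ e^{R ω - λ² ω²} e^{-λ²|p|²} ≤ (2m)⁻¹ e^{R²/4λ²} e^{-λ²|p|²}`,
a Gaussian.
-/

lemma norm_cexp_mul_mul_le (w z : ℂ) :
    ‖Complex.exp (w * z) * w‖ ≤ Real.exp ((‖z‖ + 1) * ‖w‖) := by
  have hw : ‖w‖ ≤ Real.exp ‖w‖ :=
    (le_add_of_nonneg_right zero_le_one).trans (Real.add_one_le_exp _)
  calc ‖Complex.exp (w * z) * w‖ ≤ Real.exp (‖w * z‖) * Real.exp ‖w‖ := by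
        rw [norm_mul]
        gcongr
        exact Complex.norm_exp_le_exp_norm _
    _ = Real.exp ((‖z‖ + 1) * ‖w‖) := by
        rw [← Real.exp_add, norm_mul]
        ring_nf

section
variable {α : Type*} [MeasurableSpace α] {μ : Measure α} {g w : α → ℂ}

theorem differentiable_integral_mul_cexp_mul (hg : AEStronglyMeasurable g μ)
    (hw : AEStronglyMeasurable w μ)
    (hint : ∀ R : ℝ, Integrable (fun a => ‖g a‖ * Real.exp (R * ‖w a‖)) μ) :
    Differentiable ℂ fun z => ∫ a, g a * Complex.exp (w a * z) ∂μ := by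
  intro z₀
  have hexp_meas : ∀ z : ℂ, AEStronglyMeasurable (fun a => Complex.exp (w a * z)) μ :=
    fun z => Complex.continuous_exp.comp_aestronglyMeasurable (hw.mul_const z)
  have hF_int : Integrable (fun a => g a * Complex.exp (w a * z₀)) μ :=
    (hint ‖z₀‖).mono' (hg.mul (hexp_meas z₀)) (.of_forall fun a => by
      rw [norm_mul]
      gcongr
      exact (Complex.norm_exp_le_exp_norm _).trans_eq (by rw [norm_mul, mul_comm]))
  have h_bound : ∀ a, ∀ z ∈ Metric.ball z₀ 1,
      ‖g a * (Complex.exp (w a * z) * w a)‖ ≤ ‖g a‖ * Real.exp ((‖z₀‖ + 2) * ‖w a‖) := by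
    intro a z hz
    have hz : ‖z‖ ≤ ‖z₀‖ + 1 := by
      rw [Metric.mem_ball, dist_eq_norm] at hz
      linarith [norm_le_norm_add_norm_sub' z z₀]
    rw [norm_mul]
    gcongr
    refine (norm_cexp_mul_mul_le (w a) z).trans (Real.exp_le_exp.2 ?_)
    nlinarith [norm_nonneg (w a)]
  have h_diff : ∀ a, ∀ z : ℂ, HasDerivAt (fun z => g a * Complex.exp (w a * z))
      (g a * (Complex.exp (w a * z) * w a)) z := fun a z => by
    simpa using ((hasDerivAt_id z).const_mul (w a)).cexp.const_mul (g a)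
  exact (hasDerivAt_integral_of_dominated_loc_of_deriv_le (Metric.ball_mem_nhds z₀ one_pos)
    (.of_forall fun z => hg.mul (hexp_meas z)) hF_int (hg.mul ((hexp_meas z₀).mul hw))
    (.of_forall fun a => h_bound a) (hint _)
    (.of_forall fun a z _ => h_diff a z)).2.differentiableAt

end

theorem integrable_rexp_neg_mul_sq_norm {V : Type*} [NormedAddCommGroup V]
    [InnerProductSpace ℝ V] [FiniteDimensional ℝ V] [MeasurableSpace V] [BorelSpace V]
    {b : ℝ} (hb : 0 < b) : Integrable (fun v : V => Real.exp (-b * ‖v‖ ^ 2)) := by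
  refine (GaussianFourier.integrable_cexp_neg_mul_sq_norm_add
    (b := (b : ℂ)) (by simpa using hb) 0 (0 : V)).norm.congr (.of_forall fun v => ?_)
  simp [Complex.norm_exp, ← Complex.ofReal_pow]

lemma mul_sub_mul_sq_le {a : ℝ} (ha : 0 < a) (R t : ℝ) :
    R * t - a * t ^ 2 ≤ R ^ 2 / (4 * a) := by
  rw [le_div_iff₀ (by positivity)]
  nlinarith [sq_nonneg (R - 2 * a * t)]

lemma continuous_freqOmega (m : ℝ) : Continuous (freqOmega m) := by
  unfold freqOmega
  fun_prop

lemma freqOmega_sq (m : ℝ) (p : EuclideanSpace ℝ (Fin 3)) :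
    freqOmega m p ^ 2 = ‖p‖ ^ 2 + m ^ 2 :=
  Real.sq_sqrt (by positivity)

lemma le_freqOmega (m : ℝ) (p : EuclideanSpace ℝ (Fin 3)) : m ≤ freqOmega m p :=
  Real.le_sqrt_of_sq_le (by nlinarith [sq_nonneg ‖p‖])

noncomputable def deltaAmplitude (m lam : ℝ) (x p : EuclideanSpace ℝ (Fin 3)) : ℂ :=
  ((2 * freqOmega m p : ℝ) : ℂ)⁻¹ * (Real.exp (-lam ^ 2 * (2 * ‖p‖ ^ 2 + m ^ 2)) : ℂ) *
    Complex.exp (Complex.I * (⟪p, x⟫ : ℝ))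

lemma measurable_deltaAmplitude (m lam : ℝ) (x : EuclideanSpace ℝ (Fin 3)) :
    Measurable (deltaAmplitude m lam x) := by
  unfold deltaAmplitude
  have := (continuous_freqOmega m).measurable
  fun_prop

lemma deltaPlusLam_eq_integral_mul_cexp (m lam : ℝ) (z : ℂ) (x : EuclideanSpace ℝ (Fin 3)) :
    DeltaPlusLam m lam z x = ((2 * π : ℂ) ^ 3)⁻¹ *
      ∫ p, deltaAmplitude m lam x p * Complex.exp (-Complex.I * freqOmega m p * z) := by
  unfold DeltaPlusLam deltaAmplitude
  congr 1
  refine integral_congr_ae (.of_forall fun p => ?_)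
  simp only [mul_assoc, ← Complex.exp_add]
  ring_nf

lemma norm_deltaAmplitude_mul_exp_le {m lam : ℝ} (hm : 0 < m) (hlam : 0 < lam)
    (x p : EuclideanSpace ℝ (Fin 3)) (R : ℝ) :
    ‖deltaAmplitude m lam x p‖ * Real.exp (R * ‖-Complex.I * freqOmega m p‖) ≤
      (2 * m)⁻¹ * Real.exp (R ^ 2 / (4 * lam ^ 2)) * Real.exp (-lam ^ 2 * ‖p‖ ^ 2) := by
  have hω := le_freqOmega m p
  have hω_pos : 0 < freqOmega m p := hm.trans_le hω
  have hnorm : ‖deltaAmplitude m lam x p‖ =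
      (2 * freqOmega m p)⁻¹ * Real.exp (-lam ^ 2 * (2 * ‖p‖ ^ 2 + m ^ 2)) := by
    rw [deltaAmplitude, norm_mul, norm_mul, Complex.norm_exp_I_mul_ofReal, norm_inv,
      Complex.norm_real, Complex.norm_real, Real.norm_of_nonneg (by positivity),
      Real.norm_of_nonneg (by positivity), mul_one]
  have hfreq : ‖-Complex.I * freqOmega m p‖ = freqOmega m p := by
    simp [hω_pos.le]
  have hsplit : -lam ^ 2 * (2 * ‖p‖ ^ 2 + m ^ 2) + R * freqOmega m p =
      (R * freqOmega m p - lam ^ 2 * freqOmega m p ^ 2) + -lam ^ 2 * ‖p‖ ^ 2 := by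
    rw [freqOmega_sq]
    ring
  rw [hnorm, hfreq, mul_assoc, ← Real.exp_add, hsplit, Real.exp_add, ← mul_assoc]
  gcongr
  exact mul_sub_mul_sq_le (pow_pos hlam 2) R _

lemma integrable_norm_deltaAmplitude_mul_exp {m lam : ℝ} (hm : 0 < m) (hlam : 0 < lam)
    (x : EuclideanSpace ℝ (Fin 3)) (R : ℝ) :
    Integrable (fun p => ‖deltaAmplitude m lam x p‖ *
      Real.exp (R * ‖-Complex.I * freqOmega m p‖)) := by
  refine ((integrable_rexp_neg_mul_sq_norm (pow_pos hlam 2)).const_mul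
    ((2 * m)⁻¹ * Real.exp (R ^ 2 / (4 * lam ^ 2)))).mono' ?_
    (.of_forall fun p => ?_)
  · have := measurable_deltaAmplitude m lam x
    have := (continuous_freqOmega m).measurable
    fun_prop
  · rw [Real.norm_of_nonneg (by positivity)]
    exact norm_deltaAmplitude_mul_exp_le hm hlam x p R

theorem stmt_11 (m lam : ℝ) (hm : 0 < m) (hlam : 0 < lam)
    (x : EuclideanSpace ℝ (Fin 3)) :
    Differentiable ℂ (fun z : ℂ => DeltaPlusLam m lam z x) := by
  simp_rw [deltaPlusLam_eq_integral_mul_cexp]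
  refine Differentiable.const_mul ?_ _
  exact differentiable_integral_mul_cexp_mul
    (measurable_deltaAmplitude m lam x).aestronglyMeasurable
    ((continuous_freqOmega m).measurable.complex_ofReal.const_mul _).aestronglyMeasurable
    (integrable_norm_deltaAmplitude_mul_exp hm hlam x)
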